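/- arXiv:1612.01881 — 3 statements merged into one kernel-verified Lean document; each statement's English description precedes it below -/
import Mathlib

section
/- Let p ≥ 3 be prime and a ∈ ℚ_p with 0 < |a|_p < 1, such that -a is not a square in ℚ_p. Let v = v_p(a) be the p-adic valuation of a (so v > 0). Then for every x ∈ ℚ_p with p^{-⌊v/2⌋} ≤ |x|_p ≤ p^{⌊v/2⌋}, one has |a·x + 1/x|_p = 1/|x|_p. -/
/-!
Since `a * x + 1 / x = (a * x ^ 2 + 1) / x`, it suffices that `‖a * x ^ 2 + 1‖ = 1`. The bound on
`‖x‖` gives `‖a * x ^ 2‖ ≤ 1`, so `‖a * x ^ 2 + 1‖ ≤ 1` by the ultrametric inequality. If it were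
`< 1`, then `-a * x ^ 2` would be `1` modulo `p`, hence a square by Hensel's lemma (`2` is a unit as
`p` is odd), and so would be `-a`.
-/

open Polynomial

namespace PadicInt

variable {p : ℕ} [Fact p.Prime]

theorem exists_sq_eq_of_norm_sub_one_lt (hp : p ≠ 2) {u : ℤ_[p]} (hu : ‖u - 1‖ < 1) :
    ∃ z : ℤ_[p], z ^ 2 = u := by
  have h2 : ‖(2 : ℤ_[p])‖ = 1 := by
    exact_mod_cast norm_natCast_eq_one_iff.mpr
      ((Nat.coprime_primes Fact.out Nat.prime_two).mpr hp)
  have hnorm : ‖(X ^ 2 - C u).aeval (1 : ℤ_[p])‖ <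
      ‖(X ^ 2 - C u).derivative.aeval (1 : ℤ_[p])‖ ^ 2 := by
    simpa [one_add_one_eq_two, h2, norm_sub_rev] using hu
  obtain ⟨z, hz, -⟩ := hensels_lemma hnorm
  exact ⟨z, by simpa [sub_eq_zero] using hz⟩

end PadicInt

namespace Padic

variable {p : ℕ} [Fact p.Prime]

theorem exists_sq_eq_of_norm_sub_one_lt (hp : p ≠ 2) {u : ℚ_[p]} (hu : ‖u - 1‖ < 1) :
    ∃ c : ℚ_[p], c ^ 2 = u := by
  have hu1 : ‖u‖ ≤ 1 := by
    simpa using (nonarchimedean (u - 1) 1).trans (max_le hu.le norm_one.le)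
  obtain ⟨z, hz⟩ := PadicInt.exists_sq_eq_of_norm_sub_one_lt hp (u := ⟨u, hu1⟩) hu
  exact ⟨z, by simpa using congrArg ((↑) : ℤ_[p] → ℚ_[p]) hz⟩

theorem norm_add_one_eq_one (hp : p ≠ 2) {y : ℚ_[p]} (hy : ‖y‖ ≤ 1)
    (hsq : ¬ ∃ c : ℚ_[p], c ^ 2 = -y) : ‖y + 1‖ = 1 := by
  refine le_antisymm ((nonarchimedean y 1).trans (max_le hy norm_one.le)) ?_
  by_contra! h
  exact hsq (exists_sq_eq_of_norm_sub_one_lt hp (by rwa [← neg_add', norm_neg]))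

theorem norm_mul_sq_le_one_of_norm_le {a x : ℚ_[p]} (hx : ‖x‖ ≤ (p : ℝ) ^ (a.valuation / 2)) :
    ‖a‖ * ‖x‖ ^ 2 ≤ 1 := by
  rcases eq_or_ne a 0 with rfl | ha
  · simp
  have hp : (1 : ℝ) < p := by exact_mod_cast (Fact.out : p.Prime).one_lt
  calc ‖a‖ * ‖x‖ ^ 2 ≤ (p : ℝ) ^ (-a.valuation) * ((p : ℝ) ^ (a.valuation / 2)) ^ 2 := by
        rw [norm_eq_zpow_neg_valuation ha]; gcongr
    _ = (p : ℝ) ^ (-a.valuation + 2 * (a.valuation / 2)) := by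
        rw [← zpow_natCast, ← zpow_mul, ← zpow_add₀ (by positivity)]; ring_nf
    _ ≤ (p : ℝ) ^ (0 : ℤ) := zpow_le_zpow_right₀ hp.le (by omega)
    _ = 1 := zpow_zero _

end Padic

theorem stmt8_general (p : ℕ) [Fact p.Prime] (hp : 3 ≤ p) (a : ℚ_[p])
    (hsq : ¬ ∃ c : ℚ_[p], c ^ 2 = -a)
    (x : ℚ_[p])
    (hx2 : ‖x‖ ≤ (p : ℝ) ^ (a.valuation / 2)) :
    ‖a * x + 1 / x‖ = 1 / ‖x‖ := by
  rcases eq_or_ne x 0 with rfl | hx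
  · simp
  have hsq' : ¬ ∃ c : ℚ_[p], c ^ 2 = -(a * x ^ 2) := fun ⟨c, hc⟩ ↦
    hsq ⟨c / x, by rw [div_pow, hc]; field_simp⟩
  have hy : ‖a * x ^ 2‖ ≤ 1 := by
    simpa only [norm_mul, norm_pow] using Padic.norm_mul_sq_le_one_of_norm_le hx2
  calc ‖a * x + 1 / x‖ = ‖a * x ^ 2 + 1‖ / ‖x‖ := by rw [← norm_div]; congr 1; field_simp
    _ = 1 / ‖x‖ := by rw [Padic.norm_add_one_eq_one (by omega) hy hsq']

theorem stmt8 (p : ℕ) [Fact p.Prime] (hp : 3 ≤ p) (a : ℚ_[p])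
    (ha0 : 0 < ‖a‖) (ha1 : ‖a‖ < 1)
    (hsq : ¬ ∃ c : ℚ_[p], c ^ 2 = -a)
    (x : ℚ_[p])
    (hx1 : (p : ℝ) ^ (-(a.valuation / 2)) ≤ ‖x‖)
    (hx2 : ‖x‖ ≤ (p : ℝ) ^ (a.valuation / 2)) :
    ‖a * x + 1 / x‖ = 1 / ‖x‖ :=
  stmt8_general p hp a hsq x hx2
end

section
/- Let p ≥ 3 be prime, a ∈ ℚ_p with 0 < |a|_p < 1, and c ∈ ℚ_p with c² = -a. Then φ(1/c) = 0 and φ(-1/c) = 0, and for all x, y in the closed disk D(1/c, 1/(p·|c|_p)) = {z : |z - 1/c|_p ≤ 1/(p|c|_p)}, one has |φ(x) - φ(y)|_p = |a|_p · |x - y|_p, where φ(z) = a·z + 1/z. -/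
/-! Since `φ(x) - φ(y) = (x - y)(a - 1/(xy))`, it suffices to show `|a - 1/(xy)| = |a|` on the disk.
With `s = cx`, `t = cy` and `a = -c²` one has `a - 1/(xy) = -c² (st + 1)/(st)`. On the disk
`|s - 1|, |t - 1| < 1`, so `|st| = 1` and `|st - 1| < 1`; as `p` is odd, `|2| = 1` and hence
`|st + 1| = |2 + (st - 1)| = 1` by the ultrametric inequality. -/

open IsUltrametricDist

lemma mul_add_one_div_eq_zero {K : Type*} [Field K] {a z : K} (h : a * z ^ 2 = -1) :
    a * z + 1 / z = 0 := by
  have hz : z ≠ 0 := by rintro rfl; simp at h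
  field_simp
  linear_combination h

lemma norm_mul_sub_one_lt_one_of_norm_sub_inv_le {K : Type*} [NormedField K] {c x : K} {r : ℝ}
    (hc : c ≠ 0) (hr : 1 < r) (hx : ‖x - 1 / c‖ ≤ 1 / (r * ‖c‖)) : ‖c * x - 1‖ < 1 := by
  have hc' : 0 < ‖c‖ := norm_pos_iff.mpr hc
  calc ‖c * x - 1‖ = ‖c‖ * ‖x - 1 / c‖ := by rw [← norm_mul, mul_sub, mul_one_div_cancel hc]
    _ ≤ ‖c‖ * (1 / (r * ‖c‖)) := by gcongr
    _ = 1 / r := by field_simp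
    _ < 1 := by rw [div_lt_one (by linarith)]; exact hr

section Ultrametric

variable {K : Type*} [NormedField K] [IsUltrametricDist K]

lemma norm_eq_one_of_norm_sub_one_lt_one {s : K} (hs : ‖s - 1‖ < 1) : ‖s‖ = 1 := by
  have hne : ‖s - 1‖ ≠ ‖(1 : K)‖ := by rw [norm_one]; exact hs.ne
  rw [← sub_add_cancel s 1, norm_add_eq_max_of_norm_ne_norm hne, norm_one, max_eq_right hs.le]

lemma norm_mul_sub_one_lt_one {s t : K} (hs : ‖s - 1‖ < 1) (ht : ‖t - 1‖ < 1) :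
    ‖s * t - 1‖ < 1 := by
  have hst : ‖(s - 1) * t‖ < 1 := by
    rw [norm_mul, norm_eq_one_of_norm_sub_one_lt_one ht, mul_one]; exact hs
  calc ‖s * t - 1‖ = ‖(s - 1) * t + (t - 1)‖ := by ring_nf
    _ ≤ max ‖(s - 1) * t‖ ‖t - 1‖ := norm_add_le_max _ _
    _ < 1 := max_lt hst ht

lemma norm_add_one_eq_one (h2 : ‖(2 : K)‖ = 1) {u : K} (hu : ‖u - 1‖ < 1) : ‖u + 1‖ = 1 := by
  have hne : ‖(2 : K)‖ ≠ ‖u - 1‖ := by rw [h2]; exact hu.ne'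
  calc ‖u + 1‖ = ‖2 + (u - 1)‖ := by ring_nf
    _ = 1 := by rw [norm_add_eq_max_of_norm_ne_norm hne, h2, max_eq_left hu.le]

theorem norm_mul_add_one_div_sub_of_sq_eq_neg (h2 : ‖(2 : K)‖ = 1) {a c x y : K}
    (hc : c ^ 2 = -a) (hx : ‖c * x - 1‖ < 1) (hy : ‖c * y - 1‖ < 1) :
    ‖(a * x + 1 / x) - (a * y + 1 / y)‖ = ‖a‖ * ‖x - y‖ := by
  have hc0 : c ≠ 0 := by rintro rfl; simp at hx
  have hx0 : x ≠ 0 := by rintro rfl; simp at hx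
  have hy0 : y ≠ 0 := by rintro rfl; simp at hy
  have hst : ‖c * x * (c * y) - 1‖ < 1 := norm_mul_sub_one_lt_one hx hy
  have hfactor : (a * x + 1 / x) - (a * y + 1 / y)
      = -(x - y) * c ^ 2 * (c * x * (c * y) + 1) / (c * x * (c * y)) := by
    field_simp
    linear_combination (x - y) * x * y * hc
  have hnorm_a : ‖a‖ = ‖c‖ ^ 2 := by rw [← norm_pow, hc, norm_neg]
  rw [hfactor, norm_div, norm_mul, norm_mul, norm_neg, norm_pow, norm_add_one_eq_one h2 hst,
    norm_eq_one_of_norm_sub_one_lt_one hst, hnorm_a]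
  ring

end Ultrametric

lemma Padic.norm_two_eq_one {p : ℕ} [Fact p.Prime] (hp : p ≠ 2) : ‖(2 : ℚ_[p])‖ = 1 := by
  have := Padic.norm_natCast_eq_one_iff (p := p) (n := 2)
  rw [Nat.cast_ofNat] at this
  exact this.mpr ((Nat.coprime_primes Fact.out Nat.prime_two).mpr hp)

theorem stmt11_general (p : ℕ) [Fact p.Prime] (hp : 3 ≤ p) (a c : ℚ_[p])
    (ha0 : 0 < ‖a‖) (hc : c ^ 2 = -a) :
    (a * (1 / c) + 1 / (1 / c) = 0) ∧
    (a * (-(1 / c)) + 1 / (-(1 / c)) = 0) ∧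
    (∀ x y : ℚ_[p],
      ‖x - 1 / c‖ ≤ 1 / (p * ‖c‖) → ‖y - 1 / c‖ ≤ 1 / (p * ‖c‖) →
      ‖(a * x + 1 / x) - (a * y + 1 / y)‖ = ‖a‖ * ‖x - y‖) := by
  have ha : a ≠ 0 := norm_pos_iff.mp ha0
  have hc0 : c ≠ 0 := by rintro rfl; simp [eq_comm, ha] at hc
  have hroot : a * (1 / c) ^ 2 = -1 := by
    rw [div_pow, one_pow, hc]; field_simp
  have hp1 : (1 : ℝ) < p := by exact_mod_cast (by omega : 1 < p)
  refine ⟨mul_add_one_div_eq_zero hroot, mul_add_one_div_eq_zero (by rwa [neg_sq]),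
    fun x y hx hy => ?_⟩
  exact norm_mul_add_one_div_sub_of_sq_eq_neg (Padic.norm_two_eq_one (by omega)) hc
    (norm_mul_sub_one_lt_one_of_norm_sub_inv_le hc0 hp1 hx)
    (norm_mul_sub_one_lt_one_of_norm_sub_inv_le hc0 hp1 hy)

theorem stmt11 (p : ℕ) [Fact p.Prime] (hp : 3 ≤ p) (a c : ℚ_[p])
    (ha0 : 0 < ‖a‖) (ha1 : ‖a‖ < 1) (hc : c ^ 2 = -a) :
    (a * (1 / c) + 1 / (1 / c) = 0) ∧
    (a * (-(1 / c)) + 1 / (-(1 / c)) = 0) ∧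
    (∀ x y : ℚ_[p],
      ‖x - 1 / c‖ ≤ 1 / (p * ‖c‖) → ‖y - 1 / c‖ ≤ 1 / (p * ‖c‖) →
      ‖(a * x + 1 / x) - (a * y + 1 / y)‖ = ‖a‖ * ‖x - y‖) :=
  stmt11_general p hp a c ha0 hc
end

section
/- Let p ≥ 3 be prime and a ∈ ℚ_p with |a|_p > 1 and b ∈ ℚ_p with b² = 1 - a. Then for every x ∈ ℚ_p \ {0} that does not lie in D(1/b, |b|_p^{-1}/p) ∪ D(-1/b, |b|_p^{-1}/p), the iterates of φ(x) = a·x + 1/x satisfy |φⁿ(x)|_p → ∞ as n → ∞. -/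
/-!
On `‖y‖ ≥ 1` the term `a * y` dominates `1 / y` in the ultrametric sense, so `‖φ y‖ = ‖a‖ ‖y‖`
and the orbit escapes geometrically. It remains to see that a point of the open unit disk leaves it
after one step. Since `b² = 1 - a`, we have `a x² + 1 = x² - (b x - 1)(b x + 1)`, and by
discreteness of the `p`-adic norm the excluded disks are exactly where `‖b x ∓ 1‖ < 1`. Outside
them `‖a x² + 1‖ ≥ 1`, hence `‖φ x‖ ≥ 1 / ‖x‖ > 1`.
-/

open Filter

section Ultrametric

variable {K : Type*} [NormedField K] [IsUltrametricDist K]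

lemma norm_add_eq_left_of_lt {x y : K} (h : ‖y‖ < ‖x‖) : ‖x + y‖ = ‖x‖ := by
  rw [IsUltrametricDist.norm_add_eq_max_of_norm_ne_norm h.ne', max_eq_left h.le]

variable {a : K}

lemma norm_mul_add_one_div_of_one_le (ha : 1 < ‖a‖) {y : K} (hy : 1 ≤ ‖y‖) :
    ‖a * y + 1 / y‖ = ‖a‖ * ‖y‖ := by
  refine (norm_add_eq_left_of_lt ?_).trans (norm_mul a y)
  calc ‖1 / y‖ = ‖y‖⁻¹ := by rw [norm_div, norm_one, one_div]
    _ ≤ 1 := inv_le_one_of_one_le₀ hy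
    _ < ‖a‖ * ‖y‖ := one_lt_mul_of_lt_of_le ha hy
    _ = ‖a * y‖ := (norm_mul a y).symm

lemma norm_iterate_mul_add_one_div (ha : 1 < ‖a‖) {y : K} (hy : 1 ≤ ‖y‖) (n : ℕ) :
    ‖(fun z : K => a * z + 1 / z)^[n] y‖ = ‖a‖ ^ n * ‖y‖ := by
  induction n with
  | zero => simp
  | succ n ih =>
    have h1 : 1 ≤ ‖a‖ ^ n * ‖y‖ := one_le_mul_of_one_le_of_one_le (one_le_pow₀ ha.le) hy
    rw [Function.iterate_succ_apply', norm_mul_add_one_div_of_one_le ha (ih ▸ h1), ih, pow_succ]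
    ring

lemma tendsto_norm_iterate_mul_add_one_div (ha : 1 < ‖a‖) {y : K} (hy : 1 ≤ ‖y‖) :
    Tendsto (fun n : ℕ => ‖(fun z : K => a * z + 1 / z)^[n] y‖) atTop atTop := by
  simp_rw [norm_iterate_mul_add_one_div ha hy]
  exact (tendsto_pow_atTop_atTop_of_one_lt ha).atTop_mul_const (one_pos.trans_le hy)

lemma one_lt_norm_mul_add_one_div_of_norm_lt_one {b x : K} (hb : b ^ 2 = 1 - a) (hx0 : x ≠ 0)
    (hx : ‖x‖ < 1) (h₁ : 1 ≤ ‖b * x - 1‖) (h₂ : 1 ≤ ‖b * x + 1‖) :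
    1 < ‖a * x + 1 / x‖ := by
  have hprod : 1 ≤ ‖-((b * x - 1) * (b * x + 1))‖ := by
    rw [norm_neg, norm_mul]; exact one_le_mul_of_one_le_of_one_le h₁ h₂
  have hsq : ‖x ^ 2‖ < 1 := by
    rw [norm_pow]; exact pow_lt_one₀ (norm_nonneg x) hx two_ne_zero
  have hnum : 1 ≤ ‖a * x ^ 2 + 1‖ := by
    have hid : a * x ^ 2 + 1 = -((b * x - 1) * (b * x + 1)) + x ^ 2 := by
      linear_combination x ^ 2 * hb
    rwa [hid, norm_add_eq_left_of_lt (hsq.trans_le hprod)]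
  have hφ : a * x + 1 / x = (a * x ^ 2 + 1) / x := by field_simp
  rw [hφ, norm_div, one_lt_div (norm_pos_iff.mpr hx0)]
  exact hx.trans_le hnum

end Ultrametric

namespace Padic

variable {p : ℕ} [Fact p.Prime]

lemma norm_le_of_norm_div_lt {c z : ℚ_[p]} (h : ‖c‖ / p < ‖z‖) : ‖c‖ ≤ ‖z‖ := by
  rcases eq_or_ne c 0 with rfl | hc
  · simp
  have hp : (p : ℝ) ≠ 0 := by exact_mod_cast (Fact.out : p.Prime).ne_zero
  have hdiv : ‖c‖ / p = (p : ℝ) ^ (-c.valuation - 1) := by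
    rw [norm_eq_zpow_neg_valuation hc, zpow_sub₀ hp, zpow_one]
  rw [hdiv, ← not_le, norm_le_pow_iff_norm_lt_pow_add_one, sub_add_cancel, not_lt,
    ← norm_eq_zpow_neg_valuation hc] at h
  exact h

lemma one_le_norm_mul_sub_of_not_le {b x : ℚ_[p]} (hb : b ≠ 0) (c : ℚ_[p])
    (h : ¬ ‖x - c / b‖ ≤ ‖b‖⁻¹ / p) : 1 ≤ ‖b * x - c‖ := by
  have hdist : ‖b‖⁻¹ ≤ ‖x - c / b‖ := by
    rw [← norm_inv]; exact norm_le_of_norm_div_lt (by rwa [norm_inv, ← not_le])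
  calc (1 : ℝ) = ‖b‖ * ‖b‖⁻¹ := (mul_inv_cancel₀ (norm_ne_zero_iff.mpr hb)).symm
    _ ≤ ‖b‖ * ‖x - c / b‖ := by gcongr
    _ = ‖b * x - c‖ := by rw [← norm_mul, mul_sub, mul_div_cancel₀ c hb]

end Padic

theorem stmt14_general (p : ℕ) [Fact p.Prime] (a b : ℚ_[p]) (ha : 1 < ‖a‖)
    (hb : b ^ 2 = 1 - a)
    (x : ℚ_[p]) (hx : x ≠ 0)
    (h1 : ¬ ‖x - 1 / b‖ ≤ ‖b‖⁻¹ / p)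
    (h2 : ¬ ‖x - (-(1 / b))‖ ≤ ‖b‖⁻¹ / p) :
    Filter.Tendsto (fun n : ℕ => ‖(fun z : ℚ_[p] => a * z + 1 / z)^[n] x‖)
      Filter.atTop Filter.atTop := by
  have hb0 : b ≠ 0 := by
    rintro rfl
    have ha1 : a = 1 := by linear_combination hb
    rw [ha1, norm_one] at ha
    exact ha.false
  have hφx : 1 ≤ ‖a * x + 1 / x‖ := by
    rcases le_or_gt 1 ‖x‖ with hx1 | hx1
    · rw [norm_mul_add_one_div_of_one_le ha hx1]
      exact one_le_mul_of_one_le_of_one_le ha.le hx1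
    · rw [← neg_div] at h2
      refine (one_lt_norm_mul_add_one_div_of_norm_lt_one hb hx hx1
        (Padic.one_le_norm_mul_sub_of_not_le hb0 1 h1) ?_).le
      simpa using Padic.one_le_norm_mul_sub_of_not_le hb0 (-1) h2
  rw [← tendsto_add_atTop_iff_nat 1]
  simpa only [Function.iterate_succ_apply] using tendsto_norm_iterate_mul_add_one_div ha hφx

theorem stmt14 (p : ℕ) [Fact p.Prime] (hp : 3 ≤ p) (a b : ℚ_[p]) (ha : 1 < ‖a‖)
    (hb : b ^ 2 = 1 - a)
    (x : ℚ_[p]) (hx : x ≠ 0)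
    (h1 : ¬ ‖x - 1 / b‖ ≤ ‖b‖⁻¹ / p)
    (h2 : ¬ ‖x - (-(1 / b))‖ ≤ ‖b‖⁻¹ / p) :
    Filter.Tendsto (fun n : ℕ => ‖(fun z : ℚ_[p] => a * z + 1 / z)^[n] x‖)
      Filter.atTop Filter.atTop :=
  stmt14_general p a b ha hb x hx h1 h2
end
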